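/- There do not exist: an integer r ≥ 3, distinct real numbers ρ_1, …, ρ_r, a real number c, and a function F : Fin r → Fin r → Fin r → ℝ symmetric in all three indices, such that for all i ≠ j, c − ρ_i·ρ_j = Σ_{k ≠ i, k ≠ j} (F i j k)² / ((ρ_i − ρ_k)(ρ_j − ρ_k)). -/

import Mathlib

/-!
Dividing the equation for the pair `(i, j)` by `ρ i - ρ j` and summing over `j ≠ i` gives the
Cartan identity `∑_{j ≠ i} (c - ρ i ρ j) / (ρ i - ρ j) = 0`, because the resulting double sum is
antisymmetric in `j, k`. If `ρ j, ρ i` are consecutive values, every term of their equation is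
nonnegative, so `c - ρ i ρ j ≥ 0`. Take `i` with `ρ i` maximal and `ρ i ≥ 0`: consecutiveness with
the second largest value makes every term of the Cartan identity at `i` nonnegative, so all vanish,
`c = ρ i ρ j` for all `j ≠ i`, and with two such `j` this forces `ρ i = 0`. Applied to `ρ` and to
`-ρ`, this is impossible since `min ρ < max ρ`.
-/

open Finset Function

theorem Finset.sum_sum_eq_zero_of_antisymm {ι M : Type*} [AddCommGroup M] [IsAddTorsionFree M]
    (s : Finset ι) {g : ι → ι → M} (hg : ∀ j k, g j k = -g k j) :
    ∑ j ∈ s, ∑ k ∈ s, g j k = 0 :=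
  self_eq_neg.mp <| calc
    ∑ j ∈ s, ∑ k ∈ s, g j k = ∑ j ∈ s, ∑ k ∈ s, g k j := sum_comm
    _ = -∑ j ∈ s, ∑ k ∈ s, g j k := by
      simp only [← sum_neg_distrib]
      exact sum_congr rfl fun j _ => sum_congr rfl fun k _ => hg k j

variable {ι : Type*} [Fintype ι] [DecidableEq ι]

def IsCartanSolution (c : ℝ) (ρ : ι → ℝ) (F : ι → ι → ι → ℝ) : Prop :=
  ∀ i j, i ≠ j → c - ρ i * ρ j =
    ∑ k ∈ univ.filter (fun k => k ≠ i ∧ k ≠ j), F i j k ^ 2 / ((ρ i - ρ k) * (ρ j - ρ k))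

namespace IsCartanSolution

variable {c : ℝ} {ρ : ι → ℝ} {F : ι → ι → ι → ℝ}

lemma neg (h : IsCartanSolution c ρ F) : IsCartanSolution c (-ρ) F := by
  intro i j hij
  simp only [Pi.neg_apply, neg_mul_neg, h i j hij]
  exact sum_congr rfl fun k _ => by ring

lemma sum_div_sub_eq_zero (h : IsCartanSolution c ρ F) (hF : ∀ i j k, F i j k = F i k j)
    (i : ι) : ∑ j ∈ univ.erase i, (c - ρ i * ρ j) / (ρ i - ρ j) = 0 := by
  set g : ι → ι → ℝ := fun j k => F i j k ^ 2 / ((ρ i - ρ k) * (ρ j - ρ k) * (ρ i - ρ j))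
  have hg : ∀ j k, g j k = -g k j := fun j k => by
    simp only [g, hF i k j, ← div_neg]
    congr 1
    ring
  calc ∑ j ∈ univ.erase i, (c - ρ i * ρ j) / (ρ i - ρ j)
      = ∑ j ∈ univ.erase i, ∑ k ∈ univ.erase i, g j k := sum_congr rfl fun j hj => ?_
    _ = 0 := sum_sum_eq_zero_of_antisymm _ hg
  have hdiag : g j j = 0 := by simp [g]
  have hfilter : univ.filter (fun k => k ≠ i ∧ k ≠ j) = (univ.erase i).erase j := by
    ext k
    simp [and_comm]
  rw [h i j (ne_of_mem_erase hj).symm, sum_div, ← sum_erase _ hdiag, hfilter]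
  exact sum_congr rfl fun k _ => div_div _ _ _

lemma sub_mul_nonneg_of_consecutive (h : IsCartanSolution c ρ F) {i j : ι} (hij : i ≠ j)
    (hle : ρ i ≤ ρ j) (hgap : ∀ k, ρ k ∉ Set.Ioo (ρ i) (ρ j)) : 0 ≤ c - ρ i * ρ j := by
  rw [h i j hij]
  refine sum_nonneg fun k _ => div_nonneg (sq_nonneg _) ?_
  rcases le_or_gt (ρ k) (ρ i) with hki | hik
  · exact mul_nonneg (sub_nonneg.2 hki) (sub_nonneg.2 (hki.trans hle))
  · have hjk : ρ j ≤ ρ k := not_lt.1 fun hkj => hgap k ⟨hik, hkj⟩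
    exact mul_nonneg_of_nonpos_of_nonpos (by linarith) (by linarith)

lemma eq_mul_of_isMax (h : IsCartanSolution c ρ F) (hF : ∀ i j k, F i j k = F i k j)
    (hρ : Injective ρ) {i : ι} (hmax : ∀ j, ρ j ≤ ρ i) (hnonneg : 0 ≤ ρ i) {j : ι} (hj : j ≠ i) :
    c = ρ i * ρ j := by
  have hj' : j ∈ univ.erase i := mem_erase.2 ⟨hj, mem_univ j⟩
  obtain ⟨i₁, hi₁, hi₁max⟩ := exists_max_image (univ.erase i) ρ ⟨j, hj'⟩
  have hc : 0 ≤ c - ρ i₁ * ρ i := by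
    refine h.sub_mul_nonneg_of_consecutive (ne_of_mem_erase hi₁) (hmax i₁) fun k hk => ?_
    by_cases hki : k = i
    · exact hk.2.ne (congrArg ρ hki)
    · exact (hi₁max k (mem_erase.2 ⟨hki, mem_univ k⟩)).not_gt hk.1
  have hterm : ∀ j ∈ univ.erase i, 0 ≤ (c - ρ i * ρ j) / (ρ i - ρ j) := fun j hj =>
    div_nonneg (by nlinarith [mul_nonneg hnonneg (sub_nonneg.2 (hi₁max j hj))])
      (sub_nonneg.2 (hmax j))
  have hzero := (sum_eq_zero_iff_of_nonneg hterm).1 (h.sum_div_sub_eq_zero hF i) j hj'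
  rcases div_eq_zero_iff.1 hzero with hcj | hij
  · linarith
  · exact absurd (sub_eq_zero.1 hij) (hρ.ne hj).symm

lemma eq_zero_of_isMax (h : IsCartanSolution c ρ F) (hcard : 3 ≤ Fintype.card ι)
    (hF : ∀ i j k, F i j k = F i k j) (hρ : Injective ρ) {i : ι} (hmax : ∀ j, ρ j ≤ ρ i)
    (hnonneg : 0 ≤ ρ i) : ρ i = 0 := by
  have hcard' : 1 < (univ.erase i).card := by
    rw [card_erase_of_mem (mem_univ i), card_univ]
    omega
  obtain ⟨j, hj, j', hj', hjj'⟩ := one_lt_card.1 hcard'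
  by_contra hi
  refine hjj' (hρ (mul_left_cancel₀ hi ?_))
  rw [← h.eq_mul_of_isMax hF hρ hmax hnonneg (ne_of_mem_erase hj),
    ← h.eq_mul_of_isMax hF hρ hmax hnonneg (ne_of_mem_erase hj')]

end IsCartanSolution

theorem not_isCartanSolution {c : ℝ} {ρ : ι → ℝ} {F : ι → ι → ι → ℝ}
    (hcard : 3 ≤ Fintype.card ι) (hρ : Injective ρ) (hF : ∀ i j k, F i j k = F i k j) :
    ¬ IsCartanSolution c ρ F := by
  intro h
  have : Nonempty ι := Fintype.card_pos_iff.1 (by omega)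
  obtain ⟨M, hM⟩ := Finite.exists_max ρ
  obtain ⟨m, hm⟩ := Finite.exists_min ρ
  have hmM : ρ m < ρ M := by
    obtain ⟨j, hj⟩ := Fintype.exists_ne_of_one_lt_card (by omega) M
    exact (hm j).trans_lt ((hM j).lt_of_ne (hρ.ne hj))
  have hm_neg : ρ m < 0 := by
    rcases le_or_gt 0 (ρ M) with hM0 | hM0
    · exact hmM.trans_eq (h.eq_zero_of_isMax hcard hF hρ hM hM0)
    · exact hmM.trans hM0
  have hm_zero : -ρ m = 0 :=
    h.neg.eq_zero_of_isMax hcard hF (neg_injective.comp hρ) (fun j => neg_le_neg (hm j))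
      (neg_nonneg.2 hm_neg.le)
  linarith

theorem stmt_6 :
    ¬ ∃ (r : ℕ) (_ : 3 ≤ r) (ρ : Fin r → ℝ) (_ : Function.Injective ρ)
      (c : ℝ) (F : Fin r → Fin r → Fin r → ℝ),
      (∀ i j k, F i j k = F j i k) ∧ (∀ i j k, F i j k = F i k j) ∧
      (∀ i j, i ≠ j →
        c - ρ i * ρ j =
          ∑ k ∈ Finset.univ.filter (fun k => k ≠ i ∧ k ≠ j),
            (F i j k) ^ 2 / ((ρ i - ρ k) * (ρ j - ρ k))) := by
  rintro ⟨r, hr, ρ, hρ, c, F, -, hF, h⟩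
  exact not_isCartanSolution (by simpa using hr) hρ hF h
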